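/- arXiv:2412.00337 — 5 statements merged into one kernel-verified Lean document; each statement's English description precedes it below -/
import Mathlib

section
/- If G and H are graphs on vertex sets with intersection inducing a clique of size 2 or 3 in both (i.e., G ∩ H is isomorphic to K2 or K3), and neither G nor H has a stable cutset, then G ∪ H has no stable cutset. -/
open SimpleGraph

/-- `S` is a stable cutset of `G`: an independent set whose removal disconnects `G`. -/
def SimpleGraph.IsStableCutset {V : Type*} (G : SimpleGraph V) (S : Set V) : Prop :=
  (∀ a ∈ S, ∀ b ∈ S, ¬ G.Adj a b) ∧ ¬ (G.induce Sᶜ).Preconnected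

def SimpleGraph.HasStableCutset {V : Type*} (G : SimpleGraph V) : Prop :=
  ∃ S : Set V, G.IsStableCutset S

/-- The cycle on six vertices. -/
def CycleSix : SimpleGraph (Fin 6) := SimpleGraph.fromRel (fun i j => j = i + 1)

/-- The complement of `C₆`, i.e. the triangular prism. -/
def PrismGraph : SimpleGraph (Fin 6) := CycleSixᶜ

/-- Graphs on (subsets of) a fixed ambient vertex type `α`, with graph-wise
union and intersection given by the lattice structure. -/
abbrev AmbGraph (α : Type*) := SimpleGraph.Subgraph (⊤ : SimpleGraph α)

def IsK2 {α : Type*} (H : AmbGraph α) : Prop :=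
  Nonempty (H.coe ≃g (⊤ : SimpleGraph (Fin 2)))

def IsK3 {α : Type*} (H : AmbGraph α) : Prop :=
  Nonempty (H.coe ≃g (⊤ : SimpleGraph (Fin 3)))

def IsPrism {α : Type*} (H : AmbGraph α) : Prop :=
  Nonempty (H.coe ≃g PrismGraph)

/-- The class `G_sc` of Le and Pfender. -/
inductive Gsc {α : Type*} : AmbGraph α → Prop
  | k3 (H : AmbGraph α) : IsK3 H → Gsc H
  | prism (H : AmbGraph α) : IsPrism H → Gsc H
  | union (G H : AmbGraph α) : Gsc G → Gsc H →
      (IsK2 (G ⊓ H) ∨ IsK3 (G ⊓ H)) → Gsc (G ⊔ H)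

/-!
Some edge `xy` of `G ∩ H` has an endpoint `w` outside a given stable set `S` of `G ∪ H`.
The trace of `S` on `G` is stable in `G`, hence not a cutset of `G`, so every vertex of `G`
outside `S` reaches `w` in `G - S`; likewise in `H`. Thus `(G ∪ H) - S` is connected.
-/

namespace SimpleGraph

variable {V W : Type*} {G : SimpleGraph V} {K : SimpleGraph W}

lemma preconnected_induce_compl_of_not_hasStableCutset (hG : ¬ G.HasStableCutset) {S : Set V}
    (hS : ∀ a ∈ S, ∀ b ∈ S, ¬ G.Adj a b) : (G.induce Sᶜ).Preconnected :=
  not_not.1 fun hdisc ↦ hG ⟨S, hS, hdisc⟩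

def Hom.induceCompl (f : G →g K) (S : Set W) : G.induce (f ⁻¹' S)ᶜ →g K.induce Sᶜ where
  toFun a := ⟨f a, a.2⟩
  map_rel' h := f.map_adj h

lemma Hom.reachable_induce_compl (f : G →g K) (hG : ¬ G.HasStableCutset) {S : Set W}
    (hS : ∀ a ∈ S, ∀ b ∈ S, ¬ K.Adj a b) {u v : V} (hu : f u ∉ S) (hv : f v ∉ S) :
    (K.induce Sᶜ).Reachable ⟨f u, hu⟩ ⟨f v, hv⟩ := by
  have hpre := preconnected_induce_compl_of_not_hasStableCutset hG
    (S := f ⁻¹' S) fun a ha b hb hab ↦ hS _ ha _ hb (f.map_adj hab)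
  exact (hpre ⟨u, hu⟩ ⟨v, hv⟩).map (f.induceCompl S)

lemma notMem_or_notMem_of_adj {S : Set V} (hS : ∀ a ∈ S, ∀ b ∈ S, ¬ G.Adj a b) {x y : V}
    (hxy : G.Adj x y) : x ∉ S ∨ y ∉ S := by
  by_contra! h
  exact hS x h.1 y h.2 hxy

lemma Iso.exists_adj_of_top {n : ℕ} (hn : 2 ≤ n) (e : G ≃g (⊤ : SimpleGraph (Fin n))) :
    ∃ x y, G.Adj x y :=
  ⟨e.symm ⟨0, by omega⟩, e.symm ⟨1, hn⟩, e.symm.map_adj_iff.2 (by simp)⟩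

namespace Subgraph

variable {Γ : SimpleGraph V} {G H : Γ.Subgraph}

lemma preconnected_sup_induce_compl (hG : ¬ G.coe.HasStableCutset)
    (hH : ¬ H.coe.HasStableCutset) {S : Set (G ⊔ H).verts}
    (hS : ∀ a ∈ S, ∀ b ∈ S, ¬ (G ⊔ H).coe.Adj a b) {w : V} (hwG : w ∈ G.verts)
    (hwH : w ∈ H.verts) (hwS : ⟨w, Or.inl hwG⟩ ∉ S) : ((G ⊔ H).coe.induce Sᶜ).Preconnected := by
  suffices hw : ∀ z : (Sᶜ : Set (G ⊔ H).verts), ((G ⊔ H).coe.induce Sᶜ).Reachable z ⟨_, hwS⟩ from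
    fun u v ↦ (hw u).trans (hw v).symm
  rintro ⟨⟨z, hzG | hzH⟩, hzS⟩
  · exact (inclusion le_sup_left).reachable_induce_compl hG hS
      (u := ⟨z, hzG⟩) (v := ⟨w, hwG⟩) hzS hwS
  · exact (inclusion le_sup_right).reachable_induce_compl hH hS
      (u := ⟨z, hzH⟩) (v := ⟨w, hwH⟩) hzS hwS

end Subgraph

end SimpleGraph

theorem union_no_stableCutset_general {α : Type*} (G H : AmbGraph α)
    (hint : IsK2 (G ⊓ H) ∨ IsK3 (G ⊓ H))
    (hG : ¬ G.coe.HasStableCutset) (hH : ¬ H.coe.HasStableCutset) :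
    ¬ (G ⊔ H).coe.HasStableCutset := by
  rintro ⟨S, hS, hdisc⟩
  obtain ⟨x, y, hxy⟩ : ∃ x y, (G ⊓ H).coe.Adj x y := by
    rcases hint with ⟨⟨e⟩⟩ | ⟨⟨e⟩⟩
    exacts [e.exists_adj_of_top le_rfl, e.exists_adj_of_top (by norm_num)]
  obtain ⟨⟨hxG, hxH⟩, hyG, hyH⟩ := And.intro x.2 y.2
  have hadj : (G ⊔ H).coe.Adj ⟨x, Or.inl hxG⟩ ⟨y, Or.inl hyG⟩ := Or.inl hxy.1
  rcases notMem_or_notMem_of_adj hS hadj with hxS | hyS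
  · exact hdisc (Subgraph.preconnected_sup_induce_compl hG hH hS hxG hxH hxS)
  · exact hdisc (Subgraph.preconnected_sup_induce_compl hG hH hS hyG hyH hyS)

/-- Edge or triangle identification of two graphs without stable cutsets
produces a graph without a stable cutset. -/
theorem union_no_stableCutset {α : Type*} (G H : AmbGraph α)
    (hint : IsK2 (G ⊓ H) ∨ IsK3 (G ⊓ H))
    (hGH : (G.verts \ H.verts).Nonempty) (hHG : (H.verts \ G.verts).Nonempty)
    (hG : ¬ G.coe.HasStableCutset) (hH : ¬ H.coe.HasStableCutset) :
    ¬ (G ⊔ H).coe.HasStableCutset :=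
  union_no_stableCutset_general G H hint hG hH
end

section
/- No graph in the class G_sc has a stable cutset. -/
open SimpleGraph

/-! The pullback of a stable set along a graph homomorphism is stable, so if the domain has no
stable cutset, any two vertices in the image that avoid a stable set `S` stay connected after
deleting `S`. This settles isomorphic copies of `K₃` and of the prism (a finite check), and in a
union `G ∪ H` whose intersection contains an edge `uv`, at most one of `u`, `v` lies in `S`; the
other one is connected to every vertex of `G - S` and of `H - S`. -/

namespace SimpleGraph

variable {V W : Type*} {A : SimpleGraph V} {B : SimpleGraph W}

lemma reachable_induce_compl_of_hom (f : A →g B) (hA : ¬ A.HasStableCutset) {S : Set W}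
    (hS : ∀ a ∈ S, ∀ b ∈ S, ¬ B.Adj a b) {x y : V} (hx : f x ∉ S) (hy : f y ∉ S) :
    (B.induce Sᶜ).Reachable ⟨f x, hx⟩ ⟨f y, hy⟩ := by
  have hpre : (A.induce (f ⁻¹' S)ᶜ).Preconnected := by
    by_contra hdis
    exact hA ⟨f ⁻¹' S, fun a ha b hb hab => hS _ ha _ hb (f.map_adj hab), hdis⟩
  exact (hpre ⟨x, hx⟩ ⟨y, hy⟩).map (induceHom f (Set.mapsTo_preimage f Sᶜ))

lemma not_hasStableCutset_of_surjective (f : A →g B) (hf : Function.Surjective f)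
    (hA : ¬ A.HasStableCutset) : ¬ B.HasStableCutset := by
  rintro ⟨S, hS, hdis⟩
  refine hdis fun ⟨x, hx⟩ ⟨y, hy⟩ => ?_
  obtain ⟨x, rfl⟩ := hf x
  obtain ⟨y, rfl⟩ := hf y
  exact reachable_induce_compl_of_hom f hA hS hx hy

lemma Iso.not_hasStableCutset (e : A ≃g B) (hA : ¬ A.HasStableCutset) :
    ¬ B.HasStableCutset :=
  not_hasStableCutset_of_surjective e.toHom e.surjective hA

lemma top_not_hasStableCutset (V : Type*) : ¬ (⊤ : SimpleGraph V).HasStableCutset :=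
  fun ⟨S, _, hdis⟩ => hdis (by rw [← completeGraph_eq_top, induce_top]; exact preconnected_top)

namespace Subgraph

variable {G : SimpleGraph V}

lemma exists_adj_of_iso {H : G.Subgraph} (e : H.coe ≃g B) {a b : W} (hab : B.Adj a b) :
    ∃ u v, H.Adj u v :=
  ⟨_, _, e.symm.map_adj_iff.mpr hab⟩

lemma not_hasStableCutset_sup {G₁ G₂ : G.Subgraph} (h₁ : ¬ G₁.coe.HasStableCutset)
    (h₂ : ¬ G₂.coe.HasStableCutset) {u v : V} (huv : (G₁ ⊓ G₂).Adj u v) :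
    ¬ (G₁ ⊔ G₂).coe.HasStableCutset := by
  rintro ⟨S, hS, hdis⟩
  have hu := (G₁ ⊓ G₂).edge_vert huv
  have hv := (G₁ ⊓ G₂).edge_vert huv.symm
  obtain ⟨w, hw, hwS⟩ : ∃ (w : V) (hw : w ∈ G₁.verts ∩ G₂.verts),
      (⟨w, Or.inl hw.1⟩ : (G₁ ⊔ G₂).verts) ∉ S := by
    by_contra! h
    exact hS _ (h u hu) _ (h v hv) (sup_adj.mpr (Or.inl huv.1))
  have to_w (a : ↥Sᶜ) : ((G₁ ⊔ G₂).coe.induce Sᶜ).Reachable a ⟨⟨w, Or.inl hw.1⟩, hwS⟩ := by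
    obtain ⟨⟨a, ha₁ | ha₂⟩, haS⟩ := a
    · exact reachable_induce_compl_of_hom (inclusion le_sup_left) h₁ hS
        (x := ⟨a, ha₁⟩) (y := ⟨w, hw.1⟩) haS hwS
    · exact reachable_induce_compl_of_hom (inclusion le_sup_right) h₂ hS
        (x := ⟨a, ha₂⟩) (y := ⟨w, hw.2⟩) haS hwS
  exact hdis fun a b => (to_w a).trans (to_w b).symm

end Subgraph

end SimpleGraph

instance : DecidableRel CycleSix.Adj :=
  inferInstanceAs <| DecidableRel fun v w => v ≠ w ∧ ((w = v + 1) ∨ (v = w + 1))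

instance : DecidableRel PrismGraph.Adj :=
  inferInstanceAs <| DecidableRel fun v w => v ≠ w ∧ ¬ CycleSix.Adj v w

lemma prismGraph_induce_compl_preconnected (T : Finset (Fin 6))
    (hT : ∀ a ∈ T, ∀ b ∈ T, ¬ PrismGraph.Adj a b) :
    (PrismGraph.induce (T : Set (Fin 6))ᶜ).Preconnected := by
  revert T
  decide

lemma prismGraph_not_hasStableCutset : ¬ PrismGraph.HasStableCutset := by
  rintro ⟨S, hS, hdis⟩
  lift S to Finset (Fin 6) using S.toFinite
  exact hdis (prismGraph_induce_compl_preconnected S hS)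

/-- No graph in `G_sc` has a stable cutset. -/
theorem gsc_no_stableCutset {α : Type*} (G : AmbGraph α) (h : Gsc G) :
    ¬ G.coe.HasStableCutset := by
  induction h with
  | k3 H hK₃ =>
    obtain ⟨e⟩ := hK₃
    exact e.symm.not_hasStableCutset (top_not_hasStableCutset _)
  | prism H hprism =>
    obtain ⟨e⟩ := hprism
    exact e.symm.not_hasStableCutset prismGraph_not_hasStableCutset
  | union G H _ _ hGH ihG ihH =>
    obtain ⟨u, v, huv⟩ : ∃ u v, (G ⊓ H).Adj u v := by
      rcases hGH with hK | hK <;> obtain ⟨e⟩ := hK <;>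
        exact Subgraph.exists_adj_of_iso e (a := 0) (b := 1) (by decide)
    exact Subgraph.not_hasStableCutset_sup ihG ihH huv
end

section
/- Every graph in G_sc has a generating sequence, i.e., a sequence (G_1, …, G_k) of graphs each isomorphic to K3 or the complement of C6, such that for each i < k the graph (G_1 ∪ … ∪ G_i) ∩ G_{i+1} is isomorphic to K2 or K3, and G = G_1 ∪ … ∪ G_k. -/
open SimpleGraph

def unionList {α : Type*} (L : List (AmbGraph α)) : AmbGraph α := L.foldr (· ⊔ ·) ⊥

/-- `L = (G₁,…,G_k)` is a generating sequence for `G`. -/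
def IsGenSeq {α : Type*} (L : List (AmbGraph α)) (G : AmbGraph α) : Prop :=
  L ≠ [] ∧ (∀ H ∈ L, IsK3 H ∨ IsPrism H) ∧
  (∀ i : ℕ, (h : i + 1 < L.length) →
     IsK2 (unionList (L.take (i + 1)) ⊓ L.get ⟨i + 1, h⟩) ∨
     IsK3 (unionList (L.take (i + 1)) ⊓ L.get ⟨i + 1, h⟩)) ∧
  unionList L = G

/-!
Strengthen the induction: every complete subgraph `T` of `G ∈ G_sc` lies in the first member of
some generating sequence of `G` (for `T = ⊥` this is the theorem). If `G = A ∪ B` with `A ∩ B`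
complete, then `T` lies in `A` or in `B`, say in `A`, since an edge joining a vertex outside `A` to
one outside `B` could belong to neither. Generate `A` starting at a block containing `T`, then
append a sequence for `B` whose first block contains `A ∩ B`. Every block of `B` meets `A` only
inside `A ∩ B`, so after the first one the gluing conditions are those of `B`'s own sequence.
-/

section Lattice

variable {L : Type*}

lemma inf_eq_inf_of_le_of_inf_le [SemilatticeInf L] {a b x : L} (hxb : x ≤ b) (hab : a ⊓ b ≤ x) :
    a ⊓ x = a ⊓ b :=
  le_antisymm (inf_le_inf_left a hxb) (le_inf inf_le_left hab)

lemma sup_inf_eq_of_le_of_inf_le [DistribLattice L] {a b p x : L} (hxb : x ≤ b)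
    (hab : a ⊓ b ≤ p) : (a ⊔ p) ⊓ x = p ⊓ x := by
  rw [inf_sup_right]
  exact sup_eq_right.mpr (le_inf ((inf_le_inf_left a hxb).trans hab) inf_le_right)

end Lattice

section GeneratingSequence

variable {α : Type*}

lemma pairwise_adj_of_iso_top {β : Type*} {H : AmbGraph α} (e : H.coe ≃g (⊤ : SimpleGraph β)) :
    H.verts.Pairwise H.Adj := by
  intro x hx y hy hxy
  have hne : e ⟨x, hx⟩ ≠ e ⟨y, hy⟩ := fun h => hxy (congrArg Subtype.val (e.injective h))
  exact (e.map_adj_iff (v := ⟨x, hx⟩) (w := ⟨y, hy⟩)).mp hne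

lemma pairwise_adj_of_isK2_or_isK3 {H : AmbGraph α} (h : IsK2 H ∨ IsK3 H) :
    H.verts.Pairwise H.Adj := by
  rcases h with ⟨⟨e⟩⟩ | ⟨⟨e⟩⟩
  exacts [pairwise_adj_of_iso_top e, pairwise_adj_of_iso_top e]

section Complete

variable {T A B : AmbGraph α}

lemma le_of_le_sup_of_verts_subset (hT : T ≤ A ⊔ B) (hAB : (A ⊓ B).verts.Pairwise (A ⊓ B).Adj)
    (hsub : T.verts ⊆ A.verts) : T ≤ A := by
  refine ⟨hsub, fun v w hvw => ?_⟩
  rcases hT.2 hvw with h | h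
  · exact h
  · exact (hAB ⟨hsub (T.edge_vert hvw), B.edge_vert h⟩ ⟨hsub (T.edge_vert hvw.symm),
      B.edge_vert h.symm⟩ hvw.ne).1

lemma le_or_le_of_le_sup (hT : T ≤ A ⊔ B) (hTc : T.verts.Pairwise T.Adj)
    (hAB : (A ⊓ B).verts.Pairwise (A ⊓ B).Adj) : T ≤ A ∨ T ≤ B := by
  by_contra! ⟨hTA, hTB⟩
  have hBA : (B ⊓ A).verts.Pairwise (B ⊓ A).Adj := inf_comm A B ▸ hAB
  obtain ⟨a, haT, haA⟩ := Set.not_subset.mp (mt (le_of_le_sup_of_verts_subset hT hAB) hTA)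
  obtain ⟨b, hbT, hbB⟩ :=
    Set.not_subset.mp (mt (le_of_le_sup_of_verts_subset (sup_comm A B ▸ hT) hBA) hTB)
  have hab : a ≠ b := by
    rintro rfl
    exact (hT.1 haT).elim haA hbB
  rcases hT.2 (hTc haT hbT hab) with h | h
  · exact haA (A.edge_vert h)
  · exact hbB (B.edge_vert h.symm)

end Complete

lemma unionList_nil : unionList ([] : List (AmbGraph α)) = ⊥ := rfl

lemma unionList_cons (H : AmbGraph α) (L : List (AmbGraph α)) :
    unionList (H :: L) = H ⊔ unionList L := rfl

lemma unionList_append (L₁ L₂ : List (AmbGraph α)) :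
    unionList (L₁ ++ L₂) = unionList L₁ ⊔ unionList L₂ := by
  induction L₁ with
  | nil => rw [List.nil_append, unionList_nil, bot_sup_eq]
  | cons H L ih => rw [List.cons_append, unionList_cons, unionList_cons, ih, sup_assoc]

lemma le_unionList {L : List (AmbGraph α)} {H : AmbGraph α} (h : H ∈ L) : H ≤ unionList L := by
  induction L with
  | nil => cases h
  | cons K L ih =>
    rcases List.mem_cons.mp h with rfl | h
    · exact le_sup_left
    · exact (ih h).trans le_sup_right

lemma isGenSeq_singleton {H : AmbGraph α} (h : IsK3 H ∨ IsPrism H) : IsGenSeq [H] H :=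
  ⟨List.cons_ne_nil _ _, fun K hK => List.mem_singleton.mp hK ▸ h,
    fun i hi => absurd hi (by simp), sup_bot_eq H⟩

lemma isGenSeq_append {LA rest : List (AmbGraph α)} {A B H : AmbGraph α}
    (hA : IsGenSeq LA A) (hB : IsGenSeq (H :: rest) B) (hAB : IsK2 (A ⊓ B) ∨ IsK3 (A ⊓ B))
    (hABH : A ⊓ B ≤ H) : IsGenSeq (LA ++ H :: rest) (A ⊔ B) := by
  obtain ⟨hA0, hAblocks, hAglue, rfl⟩ := hA
  obtain ⟨-, hBblocks, hBglue, rfl⟩ := hB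
  refine ⟨by simp [hA0], fun K hK => (List.mem_append.mp hK).elim (hAblocks K) (hBblocks K),
    fun i hi => ?_, unionList_append _ _⟩
  rcases lt_or_ge (i + 1) LA.length with hiA | hiA
  · simpa only [List.get_eq_getElem, List.take_append_of_le_length hiA.le,
      List.getElem_append_left hiA] using hAglue i hiA
  obtain ⟨j, hj⟩ := Nat.exists_eq_add_of_le hiA
  have hX : ∀ X ∈ H :: rest, X ≤ unionList (H :: rest) := fun X hX => le_unionList hX
  simp only [List.get_eq_getElem, hj, List.take_length_add_append, unionList_append,
    List.getElem_append_right (Nat.le_add_right _ _), Nat.add_sub_cancel_left]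
  cases j with
  | zero =>
    rwa [List.take_zero, unionList_nil, sup_bot_eq, List.getElem_cons_zero,
      inf_eq_inf_of_le_of_inf_le (hX H List.mem_cons_self) hABH]
  | succ k =>
    have hk : k + 1 < (H :: rest).length := by simp only [List.length_append] at hi; omega
    rw [sup_inf_eq_of_le_of_inf_le (hX _ (List.getElem_mem hk))
      (hABH.trans (le_unionList (by simp)))]
    exact hBglue k hk

theorem Gsc.exists_isGenSeq_cons_of_le {G : AmbGraph α} (hG : Gsc G) {T : AmbGraph α}
    (hTG : T ≤ G) (hT : T.verts.Pairwise T.Adj) :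
    ∃ (H : AmbGraph α) (rest : List (AmbGraph α)), IsGenSeq (H :: rest) G ∧ T ≤ H := by
  induction hG generalizing T with
  | k3 H hH => exact ⟨H, [], isGenSeq_singleton (Or.inl hH), hTG⟩
  | prism H hH => exact ⟨H, [], isGenSeq_singleton (Or.inr hH), hTG⟩
  | union A B _ _ hAB ihA ihB =>
    have hABc := pairwise_adj_of_isK2_or_isK3 hAB
    rcases le_or_le_of_le_sup hTG hT hABc with hTA | hTB
    · obtain ⟨HA, restA, hgA, hTHA⟩ := ihA hTA hT
      obtain ⟨HB, restB, hgB, hABHB⟩ := ihB inf_le_right hABc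
      exact ⟨HA, restA ++ HB :: restB, isGenSeq_append hgA hgB hAB hABHB, hTHA⟩
    · have hBA : IsK2 (B ⊓ A) ∨ IsK3 (B ⊓ A) := inf_comm A B ▸ hAB
      obtain ⟨HB, restB, hgB, hTHB⟩ := ihB hTB hT
      obtain ⟨HA, restA, hgA, hBAHA⟩ := ihA inf_le_right (inf_comm A B ▸ hABc)
      exact ⟨HB, restB ++ HA :: restA, sup_comm A B ▸ isGenSeq_append hgB hgA hBA hBAHA, hTHB⟩

end GeneratingSequence

/-- Every graph in `G_sc` has a generating sequence. -/
theorem gsc_has_genSeq {α : Type*} (G : AmbGraph α) (h : Gsc G) :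
    ∃ L : List (AmbGraph α), IsGenSeq L G := by
  obtain ⟨H, rest, hL, -⟩ := h.exists_isGenSeq_cons_of_le bot_le (Set.pairwise_empty _)
  exact ⟨H :: rest, hL⟩
end

section
/- If G is a minimum-order counterexample to the statement 'every graph with n vertices and at most 2n−3 edges has a stable cutset or belongs to G_sc', then any two non-adjacent vertices of G have at most 2 common neighbors. -/
open SimpleGraph

/-!
Identify `y` with `x`. Since `x` and `y` are non-adjacent, the quotient map is a surjective
homomorphism onto the resulting graph `H`, so a stable cutset of `H` pulls back to one of `G`.
Each common neighbour `z` makes the edges `xz` and `yz` coincide, so if `G` has `n` vertices,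
at most `2n - 3` edges and at least three common neighbours of `x` and `y`, then `H` has `n - 1`
vertices and at most `2(n - 1) - 4` edges. By minimality `H` is then in `G_sc`, which is
impossible because every graph in `G_sc` has exactly `2|V| - 3` edges.
-/

instance inst_s15 : DecidableRel PrismGraph.Adj := fun a b =>
  decidable_of_iff (a ≠ b ∧ ¬ (a ≠ b ∧ (b = a + 1 ∨ a = b + 1))) <| by
    rw [PrismGraph, compl_adj, CycleSix, fromRel_adj]

lemma SimpleGraph.HasStableCutset.of_surjective {V W : Type*} {G : SimpleGraph V}
    {H : SimpleGraph W} (φ : G →g H) (hφ : Function.Surjective φ) (hH : H.HasStableCutset) :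
    G.HasStableCutset := by
  obtain ⟨S, hS, hdis⟩ := hH
  refine ⟨φ ⁻¹' S, fun a ha b hb hab => hS _ ha _ hb (φ.map_adj hab), fun hpre => hdis ?_⟩
  let ψ : G.induce (φ ⁻¹' S)ᶜ →g H.induce Sᶜ := ⟨fun v => ⟨φ v, v.2⟩, φ.map_adj⟩
  refine hpre.map ψ fun w => ?_
  obtain ⟨v, hv⟩ := hφ w
  have hvS : φ v ∉ S := hv ▸ w.2
  exact ⟨⟨v, hvS⟩, Subtype.ext hv⟩

namespace AmbGraph

variable {α β : Type*}

lemma edgeSet_finite {G : AmbGraph α} (hG : G.verts.Finite) : G.edgeSet.Finite := by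
  have := hG.to_subtype
  rw [← G.image_coe_edgeSet_coe]
  exact (Set.toFinite _).image _

lemma ncard_verts_of_iso {W : AmbGraph α} {B : SimpleGraph β} (e : W.coe ≃g B) :
    W.verts.ncard = Nat.card β :=
  Nat.card_congr e.toEquiv

lemma ncard_edgeSet_of_iso {W : AmbGraph α} {B : SimpleGraph β} (e : W.coe ≃g B) :
    W.edgeSet.ncard = B.edgeSet.ncard := by
  rw [← W.image_coe_edgeSet_coe,
    Set.ncard_image_of_injective _ (Sym2.map.injective Subtype.val_injective)]
  exact Nat.card_congr e.mapEdgeSet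

lemma ncard_edgeSet_add_three_of_iso {W : AmbGraph α} {B : SimpleGraph β} [Fintype β]
    [DecidableRel B.Adj] (e : W.coe ≃g B) (hB : B.edgeFinset.card + 3 = 2 * Fintype.card β) :
    W.edgeSet.ncard + 3 = 2 * W.verts.ncard := by
  rwa [ncard_edgeSet_of_iso e, ncard_verts_of_iso e, ← coe_edgeFinset, Set.ncard_coe_finset,
    Nat.card_eq_fintype_card]

lemma ncard_edgeSet_add_three_of_isK2 {W : AmbGraph α} (h : IsK2 W) :
    W.edgeSet.ncard + 3 = 2 * W.verts.ncard :=
  ncard_edgeSet_add_three_of_iso h.some (by decide)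

lemma ncard_edgeSet_add_three_of_isK3 {W : AmbGraph α} (h : IsK3 W) :
    W.edgeSet.ncard + 3 = 2 * W.verts.ncard :=
  ncard_edgeSet_add_three_of_iso h.some (by decide)

lemma ncard_edgeSet_add_three_of_isPrism {W : AmbGraph α} (h : IsPrism W) :
    W.edgeSet.ncard + 3 = 2 * W.verts.ncard :=
  ncard_edgeSet_add_three_of_iso h.some (by decide)

/-- The image of `G` under a vertex map `f`; edges collapsed to a single vertex are dropped. -/
def image (f : α → β) (G : AmbGraph α) : AmbGraph β where
  verts := f '' G.verts
  Adj a b := a ≠ b ∧ ∃ u v, G.Adj u v ∧ f u = a ∧ f v = b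
  adj_sub h := h.1
  edge_vert := fun ⟨_, u, _, h, hu, _⟩ => ⟨u, G.edge_vert h, hu⟩
  symm := ⟨fun _ _ ⟨hne, u, v, h, hu, hv⟩ => ⟨hne.symm, v, u, h.symm, hv, hu⟩⟩

lemma edgeSet_image_subset (f : α → β) (G : AmbGraph α) :
    (G.image f).edgeSet ⊆ Sym2.map f '' G.edgeSet := by
  rintro e he
  induction e using Sym2.ind with | h a b =>
  obtain ⟨-, u, v, huv, rfl, rfl⟩ : (G.image f).Adj a b := he
  exact ⟨s(u, v), huv, rfl⟩

def toImage (f : α → β) (G : AmbGraph α) (hf : ∀ u v, G.Adj u v → f u ≠ f v) :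
    G.coe →g (G.image f).coe where
  toFun v := ⟨f v, Set.mem_image_of_mem f v.2⟩
  map_rel' {u v} h := ⟨hf u v h, u, v, h, rfl, rfl⟩

lemma toImage_surjective (f : α → β) (G : AmbGraph α) (hf : ∀ u v, G.Adj u v → f u ≠ f v) :
    Function.Surjective (G.toImage f hf) := by
  rintro ⟨w, hw⟩
  obtain ⟨v, hv, rfl⟩ := hw
  exact ⟨⟨v, hv⟩, rfl⟩

section Identify

variable [DecidableEq α] {G : AmbGraph α} {x y : α}

lemma update_ne_update_of_adj (hxy : ¬ G.Adj x y) {u v : α} (huv : G.Adj u v) :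
    Function.update id y x u ≠ Function.update id y x v := by
  have hne : u ≠ v := G.adj_sub huv
  by_cases hu : u = y <;> by_cases hv : v = y
  · exact absurd (hu.trans hv.symm) hne
  · subst hu
    rw [Function.update_self, Function.update_of_ne hv]
    rintro rfl
    exact hxy huv.symm
  · subst hv
    rw [Function.update_self, Function.update_of_ne hu]
    rintro rfl
    exact hxy huv
  · rwa [Function.update_of_ne hu, Function.update_of_ne hv]

lemma verts_image_update (hx : x ∈ G.verts) (hxy : x ≠ y) :
    (G.image (Function.update id y x)).verts = G.verts \ {y} := by
  ext v
  constructor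
  · rintro ⟨u, hu, rfl⟩
    by_cases huy : u = y
    · rw [huy, Function.update_self]
      exact ⟨hx, hxy⟩
    · rw [Function.update_of_ne huy]
      exact ⟨hu, huy⟩
  · rintro ⟨hv, hvy⟩
    exact ⟨v, hv, Function.update_of_ne hvy _ _⟩

lemma ncard_edgeSet_image_update_add_le (hG : G.verts.Finite) (hxy : x ≠ y) :
    (G.image (Function.update id y x)).edgeSet.ncard + {z | G.Adj x z ∧ G.Adj y z}.ncard ≤
      G.edgeSet.ncard := by
  set f := Function.update id y x
  set N := {z | G.Adj x z ∧ G.Adj y z}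
  set T := (fun z => s(y, z)) '' N
  have hE := edgeSet_finite hG
  have hTE : T ⊆ G.edgeSet := by
    rintro _ ⟨z, hz, rfl⟩
    exact hz.2
  have hTN : T.ncard = N.ncard :=
    Set.ncard_image_of_injective _ fun _ _ h => Sym2.congr_right.mp h
  have hsub : (G.image f).edgeSet ⊆ Sym2.map f '' (G.edgeSet \ T) := by
    intro e he
    obtain ⟨e, heG, rfl⟩ := edgeSet_image_subset f G he
    by_cases heT : e ∈ T
    · obtain ⟨z, hz, rfl⟩ := heT
      refine ⟨s(x, z), ⟨hz.1, ?_⟩, ?_⟩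
      · rintro ⟨z', hz', h⟩
        rcases Sym2.eq_iff.mp h with ⟨hyx, -⟩ | ⟨hyz, -⟩
        · exact hxy hyx.symm
        · exact (G.adj_sub hz.2).ne hyz
      · simp only [Sym2.map_mk, f, Function.update_self, Function.update_of_ne hxy, id]
    · exact ⟨e, ⟨heG, heT⟩, rfl⟩
  calc (G.image f).edgeSet.ncard + N.ncard
      ≤ (G.edgeSet \ T).ncard + T.ncard := by
        rw [hTN]
        exact Nat.add_le_add_right ((Set.ncard_le_ncard hsub (hE.sdiff.image _)).trans
          (Set.ncard_image_le hE.sdiff)) _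
    _ = G.edgeSet.ncard := Set.ncard_sdiff_add_ncard_of_subset hTE hE

end Identify

end AmbGraph

namespace Gsc

variable {α : Type*}

lemma verts_finite {H : AmbGraph α} (h : Gsc H) : H.verts.Finite := by
  induction h with
  | k3 W hW => obtain ⟨e⟩ := hW; exact Set.finite_coe_iff.mp (.of_equiv _ e.toEquiv.symm)
  | prism W hW => obtain ⟨e⟩ := hW; exact Set.finite_coe_iff.mp (.of_equiv _ e.toEquiv.symm)
  | union A B _ _ _ hA hB => exact hA.union hB

lemma ncard_edgeSet_add_three {H : AmbGraph α} (h : Gsc H) :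
    H.edgeSet.ncard + 3 = 2 * H.verts.ncard := by
  induction h with
  | k3 W hW => exact AmbGraph.ncard_edgeSet_add_three_of_isK3 hW
  | prism W hW => exact AmbGraph.ncard_edgeSet_add_three_of_isPrism hW
  | union A B hA hB hAB ihA ihB =>
    have hI : (A ⊓ B).edgeSet.ncard + 3 = 2 * (A ⊓ B).verts.ncard :=
      hAB.elim AmbGraph.ncard_edgeSet_add_three_of_isK2 AmbGraph.ncard_edgeSet_add_three_of_isK3
    have hV := Set.ncard_union_add_ncard_inter _ _ hA.verts_finite hB.verts_finite
    have hE := Set.ncard_union_add_ncard_inter _ _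
      (AmbGraph.edgeSet_finite hA.verts_finite) (AmbGraph.edgeSet_finite hB.verts_finite)
    rw [← Subgraph.verts_sup, ← Subgraph.verts_inf] at hV
    rw [← Subgraph.edgeSet_sup, ← Subgraph.edgeSet_inf] at hE
    omega

end Gsc

theorem min_cex_common_neighbors_general {α : Type*} (G : AmbGraph α)
    (hfin : G.verts.Finite)
    (hsize : (G.edgeSet.ncard : ℤ) ≤ 2 * (G.verts.ncard : ℤ) - 3)
    (hsc : ¬ G.coe.HasStableCutset)
    (hmin : ∀ H : AmbGraph α, H.verts.Finite → H.verts.ncard < G.verts.ncard →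
      (H.edgeSet.ncard : ℤ) ≤ 2 * (H.verts.ncard : ℤ) - 3 →
      H.coe.HasStableCutset ∨ Gsc H) :
    ∀ x y : α, x ∈ G.verts → y ∈ G.verts → x ≠ y → ¬ G.Adj x y →
      ({z : α | G.Adj x z ∧ G.Adj y z}).ncard ≤ 2 := by
  classical
  intro x y hx hy hxy hnadj
  by_contra! hcommon
  have hHedges := AmbGraph.ncard_edgeSet_image_update_add_le hfin hxy
  set H := G.image (Function.update id y x)
  have hHverts : H.verts.ncard + 1 = G.verts.ncard := by
    rw [AmbGraph.verts_image_update hx hxy]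
    exact Set.ncard_sdiff_singleton_add_one hy hfin
  rcases hmin H (hfin.image _) (by omega) (by omega) with hcut | hgsc
  · exact hsc (hcut.of_surjective _ (G.toImage_surjective _ fun _ _ =>
      AmbGraph.update_ne_update_of_adj hnadj))
  · have := hgsc.ncard_edgeSet_add_three
    omega

/-- In a minimum-order counterexample, non-adjacent vertices have at most two
common neighbors. -/
theorem min_cex_common_neighbors {α : Type*} (G : AmbGraph α)
    (hfin : G.verts.Finite)
    (hsize : (G.edgeSet.ncard : ℤ) ≤ 2 * (G.verts.ncard : ℤ) - 3)
    (hsc : ¬ G.coe.HasStableCutset) (hgsc : ¬ Gsc G)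
    (hmin : ∀ H : AmbGraph α, H.verts.Finite → H.verts.ncard < G.verts.ncard →
      (H.edgeSet.ncard : ℤ) ≤ 2 * (H.verts.ncard : ℤ) - 3 →
      H.coe.HasStableCutset ∨ Gsc H) :
    ∀ x y : α, x ∈ G.verts → y ∈ G.verts → x ≠ y → ¬ G.Adj x y →
      ({z : α | G.Adj x z ∧ G.Adj y z}).ncard ≤ 2 :=
  min_cex_common_neighbors_general G hfin hsize hsc hmin
end

section
/- Let G be a graph and let u, v be two non-adjacent vertices of G, and let G' be the graph obtained from G by identifying u and v into a single vertex. Then every stable cutset of G' not containing the identified vertex is a stable cutset of G. -/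
open SimpleGraph

/-- The graph obtained from `G` by identifying the vertices `u` and `v` into a
single vertex (represented by `u`, with `v` removed). -/
def identifyVerts {V : Type*} (G : SimpleGraph V) (u v : V) :
    SimpleGraph {x : V // x ≠ v} :=
  SimpleGraph.fromRel (fun a b =>
    G.Adj a.1 b.1 ∨ (a.1 = u ∧ G.Adj v b.1) ∨ (b.1 = u ∧ G.Adj v a.1))

/-- Every stable cutset of the identification of two non-adjacent vertices `u`
and `v` of `G` that avoids the identified vertex is a stable cutset of `G`. -/
theorem stableCutset_of_identify {V : Type*} (G : SimpleGraph V) (u v : V)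
    (huv : u ≠ v) (hnadj : ¬ G.Adj u v)
    (S : Set {x : V // x ≠ v}) (hS : (identifyVerts G u v).IsStableCutset S)
    (hu : (⟨u, huv⟩ : {x : V // x ≠ v}) ∉ S) :
    G.IsStableCutset (Subtype.val '' S) := by
  classical
  obtain ⟨hstab, hconn⟩ := hS
  constructor
  · rintro a ⟨a', ha', rfl⟩ b ⟨b', hb', rfl⟩ hab
    exact hstab a' ha' b' hb' ⟨fun h => G.irrefl (h ▸ hab), Or.inl (Or.inl hab)⟩
  · intro hpre
    apply hconn
    -- build a surjective graph hom from G.induce S'ᶜ to G'.induce Sᶜ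
    have hmemc : ∀ x : V, x ∈ (Subtype.val '' S)ᶜ → ∀ h : x ≠ v,
        (⟨x, h⟩ : {y : V // y ≠ v}) ∈ Sᶜ := by
      intro x hx h hxS
      exact hx ⟨⟨x, h⟩, hxS, rfl⟩
    let f : {x : V // x ∈ (Subtype.val '' S)ᶜ} → {a : {y : V // y ≠ v} // a ∈ Sᶜ} :=
      fun x => if h : x.1 = v then ⟨⟨u, huv⟩, hu⟩ else ⟨⟨x.1, h⟩, hmemc x.1 x.2 h⟩
    have hhom : ∀ x y, (G.induce (Subtype.val '' S)ᶜ).Adj x y →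
        ((identifyVerts G u v).induce Sᶜ).Adj (f x) (f y) := by
      intro x y hxy
      have hadj : G.Adj x.1 y.1 := hxy
      simp only [f]
      by_cases hx : x.1 = v
      · have hy : y.1 ≠ v := fun h => G.irrefl (by rw [hx, h] at hadj; exact hadj)
        rw [dif_pos hx, dif_neg hy]
        have hadj' : G.Adj v y.1 := by rw [hx] at hadj; exact hadj
        have hyu : y.1 ≠ u := fun h => hnadj (G.adj_symm (by rw [h] at hadj'; exact hadj'))
        refine ⟨?_, Or.inl (Or.inr (Or.inl ⟨rfl, hadj'⟩))⟩
        intro h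
        exact hyu (congrArg Subtype.val h).symm
      · by_cases hy : y.1 = v
        · have hadj' : G.Adj x.1 v := by rw [hy] at hadj; exact hadj
          have hxu : x.1 ≠ u := fun h => hnadj (by rw [h] at hadj'; exact hadj')
          rw [dif_neg hx, dif_pos hy]
          refine ⟨?_, Or.inl (Or.inr (Or.inr ⟨rfl, G.adj_symm hadj'⟩))⟩
          intro h
          exact hxu (congrArg Subtype.val h)
        · rw [dif_neg hx, dif_neg hy]
          refine ⟨?_, Or.inl (Or.inl hadj)⟩
          intro h
          simp only [Function.Embedding.coe_subtype, Subtype.mk.injEq] at h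
          exact G.irrefl (by rw [h] at hadj; exact hadj)
    have hsurj : Function.Surjective f := by
      rintro ⟨⟨x, hxv⟩, hxS⟩
      refine ⟨⟨x, fun hmem => ?_⟩, ?_⟩
      · obtain ⟨b, hb, hbx⟩ := hmem
        exact hxS (by rwa [show (⟨x, hxv⟩ : {y : V // y ≠ v}) = b from Subtype.ext hbx.symm])
      · simp only [f, dif_neg hxv]
    exact hpre.map ⟨f, fun h => hhom _ _ h⟩ hsurj
end
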